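/- Every element z of the rational Puiseux field k̃ = Quot(Ā) has a terminating continued fraction: the recursive algorithm (subtract the polynomial part, invert the remainder) reaches a step where z_n = f_n after finitely many steps. -/

import Mathlib

universe u

/-- Evaluation of a finite continued fraction `[f₀, f₁, …, f_N]` in a field,
`cfEval [a] = a`, `cfEval (a :: l) = a + (cfEval l)⁻¹` (with the convention `0⁻¹ = 0`). -/
def cfEval {L : Type u} [Field L] : List L → L
  | [] => 0
  | a :: l => a + (cfEval l)⁻¹

/-- The Moebius maps `ρ_n = σ_n ∘ ⋯ ∘ σ_0`, where `σ_i x = (x - f_i)⁻¹`. -/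
def rho {L : Type u} [Field L] (f : ℕ → L) : ℕ → L → L
  | 0, x => (x - f 0)⁻¹
  | n + 1, x => (rho f n x - f (n + 1))⁻¹

/-- The derivative `ρ_n'` of `ρ_n`, computed by the chain rule from
`σ_i'(x) = -((x - f_i)⁻¹)²`. -/
def rho' {L : Type u} [Field L] (f : ℕ → L) : ℕ → L → L
  | 0, x => -((x - f 0)⁻¹) ^ 2
  | n + 1, x => -((rho f n x - f (n + 1))⁻¹) ^ 2 * rho' f n x

/-- An abstract presentation of the completion `K̂` of the Puiseux field
`E⟨⟨t⁻¹⟩⟩` over a field `E`.  The field `K` carries an additive valuation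
`ν` with values in `ℚ` on nonzero elements (normalized by `ν (t^r) = -r`,
where `mono r` plays the role of the monomial `t^r`), the subfield `E` is
embedded via `emb`, the simple "Laurent Puiseux polynomials" (the ring
generated by `E` and all rational powers of `t`) are dense, and `K` is
complete for `ν`. -/
structure PuiseuxCompletion (E : Type u) [Field E] where
  K : Type u
  [fieldK : Field K]
  ν : K → ℚ
  emb : E →+* K
  mono : ℚ → K
  mono_zero : mono 0 = 1
  mono_mul : ∀ r s : ℚ, mono r * mono s = mono (r + s)
  ν_mono : ∀ r : ℚ, ν (mono r) = -r
  ν_emb : ∀ e : E, e ≠ 0 → ν (emb e) = 0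
  ν_mul : ∀ x y : K, x ≠ 0 → y ≠ 0 → ν (x * y) = ν x + ν y
  ν_add : ∀ x y : K, x ≠ 0 → y ≠ 0 → x + y ≠ 0 → min (ν x) (ν y) ≤ ν (x + y)
  dense' : ∀ z : K, ∀ C : ℚ,
    ∃ f ∈ Subring.closure (Set.range emb ∪ Set.range mono), z = f ∨ C < ν (z - f)
  complete' : ∀ uSeq : ℕ → K,
    (∀ C : ℚ, ∃ N : ℕ, ∀ m ≥ N, ∀ n ≥ N, uSeq m = uSeq n ∨ C < ν (uSeq m - uSeq n)) →
    ∃ z : K, ∀ C : ℚ, ∃ N : ℕ, ∀ n ≥ N, uSeq n = z ∨ C < ν (uSeq n - z)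

attribute [instance] PuiseuxCompletion.fieldK

namespace PuiseuxCompletion

variable {E : Type u} [Field E] (P : PuiseuxCompletion E)

/-- The ring `Ā = E⟨t⟩` of Puiseux polynomials: finite `E`-linear combinations of
nonnegative rational powers of `t`. -/
def Abar : Subring P.K :=
  Subring.closure (Set.range P.emb ∪ P.mono '' {r : ℚ | 0 ≤ r})

/-- `deg f = -ν f`. -/
def deg (f : P.K) : ℚ := -P.ν f

/-- The rational Puiseux field `k̃ = Quot(Ā) = ⋃ₙ E(t^{1/n})`, as a subfield of `K̂`. -/
def ktilde : Subfield P.K := Subfield.closure (P.Abar : Set P.K)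

/-- `uSeq n → z` with respect to the valuation `ν`. -/
def TendsTo (uSeq : ℕ → P.K) (z : P.K) : Prop :=
  ∀ C : ℚ, ∃ N : ℕ, ∀ n ≥ N, uSeq n = z ∨ C < P.ν (uSeq n - z)

/-- One step of the continued fraction algorithm succeeds at index `i`:
`f i` is the Puiseux polynomial with `ν (z_i - f i) > 0`, the fraction does not
end at `i` (`z_i ≠ f i`), and `z_{i+1} = (z_i - f i)⁻¹`. -/
def CFStep (f zs : ℕ → P.K) (i : ℕ) : Prop :=
  f i ∈ P.Abar ∧ 0 < P.ν (zs i - f i) ∧ zs i ≠ f i ∧ zs (i + 1) = (zs i - f i)⁻¹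

/-- The `n`-th approximant `x_n = [f₀, …, f_n]_{ev}`. -/
def approx (f : ℕ → P.K) (n : ℕ) : P.K :=
  cfEval (List.ofFn fun i : Fin (n + 1) => f i)

/-- The continued fraction of `z` begins with the coefficients `f 0, …, f n`. -/
def CFBegins (f : ℕ → P.K) (n : ℕ) (z : P.K) : Prop :=
  ∃ zs : ℕ → P.K, zs 0 = z ∧ (∀ i < n, P.CFStep f zs i) ∧
    f n ∈ P.Abar ∧ (zs n = f n ∨ 0 < P.ν (zs n - f n))

/-- `z` is the value of the continued fraction expression with coefficients `f`
and length `L` (finite or infinite); the coefficients are Puiseux polynomials of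
positive degree after the zeroth one. -/
def CFExprEval (f : ℕ → P.K) (L : WithTop ℕ) (z : P.K) : Prop :=
  f 0 ∈ P.Abar ∧
  (∀ i : ℕ, 1 ≤ i → (i : WithTop ℕ) ≤ L → f i ∈ P.Abar ∧ 0 < P.deg (f i)) ∧
  ((∃ N : ℕ, L = (N : WithTop ℕ) ∧ z = P.approx f N) ∨
    (L = ⊤ ∧ P.TendsTo (fun n => P.approx f n) z))

/-- The equivalence relation `(a, r) ~ (a', r')` iff `r = r'` and `ν (a - a') ≥ r`
(the pairs define the same Berkovich point `η_{a,r}` of type II or III). -/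
def ballEquiv (p q : P.K × ℝ) : Prop :=
  p.2 = q.2 ∧ (p.1 = q.1 ∨ p.2 ≤ (P.ν (p.1 - q.1) : ℝ))

open scoped Classical in
/-- The Berkovich hyperbolic distance, computed on representatives. -/
noncomputable def berkDist (p q : P.K × ℝ) : ℝ :=
  if p.1 = q.1 ∨ min p.2 q.2 ≤ (P.ν (p.1 - q.1) : ℝ) then |p.2 - q.2|
  else p.2 + q.2 - 2 * (P.ν (p.1 - q.1) : ℝ)

/-- The closed ball `B_a^{[r]} = {b : ν (b - a) ≥ r}` corresponding to `η_{a,r}`. -/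
def closedBall (a : P.K) (r : ℝ) : Set P.K :=
  {b : P.K | b = a ∨ r ≤ (P.ν (b - a) : ℝ)}

/-- The Moebius transformation associated to a `2 × 2` matrix. -/
def mob (g : Matrix (Fin 2) (Fin 2) P.K) (x : P.K) : P.K :=
  (g 0 0 * x + g 0 1) / (g 1 0 * x + g 1 1)

/-- The ring `A_M = E[t^{1/M}]`. -/
def AM (M : ℕ) : Subring P.K :=
  Subring.closure (Set.range P.emb ∪ {P.mono (1 / (M : ℚ))})

/-- The field `E(t^{1/M})`, whose `ν`-completion inside `K̂` is `K_M = E((t^{-1/M}))`. -/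
def kM (M : ℕ) : Subfield P.K :=
  Subfield.closure (Set.range P.emb ∪ {P.mono (1 / (M : ℚ))})

end PuiseuxCompletion

/-! An element of `k̃` is a quotient `a(t^{1/M}) / b(t^{1/M})` of two polynomials `a, b` over `E`.
Evaluation at `t^{1/M}` turns the degree of a nonzero polynomial into `-M ν`.  Writing
`a = b q + r` with `deg r < deg b`, the Puiseux-polynomial part of `a(t^{1/M}) / b(t^{1/M})` is
therefore `q(t^{1/M})` and the remainder `r(t^{1/M}) / b(t^{1/M})` has positive valuation, so the
continued fraction algorithm runs the Euclidean algorithm on `(a, b)`, which stops because the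
degrees drop. -/

namespace PuiseuxCompletion

open Polynomial

variable {E : Type u} [Field E] (P : PuiseuxCompletion E)

lemma ν_one : P.ν 1 = 0 := by
  have h := P.ν_mul 1 1 one_ne_zero one_ne_zero
  rw [one_mul] at h
  linarith

lemma ν_neg {x : P.K} (hx : x ≠ 0) : P.ν (-x) = P.ν x := by
  have h := P.ν_mul (-1) (-1) (by simp) (by simp)
  rw [neg_mul_neg, one_mul, ν_one] at h
  rw [← neg_one_mul, P.ν_mul _ _ (by simp) hx]
  linarith

lemma ν_inv {x : P.K} (hx : x ≠ 0) : P.ν x⁻¹ = -P.ν x := by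
  have h := P.ν_mul x x⁻¹ hx (inv_ne_zero hx)
  rw [mul_inv_cancel₀ hx, ν_one] at h
  linarith

lemma ν_div {x y : P.K} (hx : x ≠ 0) (hy : y ≠ 0) : P.ν (x / y) = P.ν x - P.ν y := by
  rw [div_eq_mul_inv, P.ν_mul _ _ hx (inv_ne_zero hy), P.ν_inv hy, sub_eq_add_neg]

lemma add_ne_zero_of_ν_lt {x y : P.K} (hx : x ≠ 0) (hlt : P.ν x < P.ν y) : x + y ≠ 0 := by
  intro h
  rw [eq_neg_of_add_eq_zero_right h, P.ν_neg hx] at hlt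
  exact lt_irrefl _ hlt

lemma ν_add_eq_of_lt {x y : P.K} (hx : x ≠ 0) (hy : y ≠ 0) (hlt : P.ν x < P.ν y) :
    P.ν (x + y) = P.ν x := by
  have hxy := P.add_ne_zero_of_ν_lt hx hlt
  refine le_antisymm ?_ ((le_min le_rfl hlt.le).trans (P.ν_add x y hx hy hxy))
  by_contra! hgt
  have h := P.ν_add (x + y) (-y) hxy (neg_ne_zero.mpr hy) (by simpa using hx)
  rw [add_neg_cancel_right, P.ν_neg hy] at h
  exact lt_irrefl _ ((lt_min hgt hlt).trans_le h)

lemma mono_ne_zero (r : ℚ) : P.mono r ≠ 0 := by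
  intro h
  have h1 := P.mono_mul r (-r)
  rw [h, zero_mul, add_neg_cancel, P.mono_zero] at h1
  exact zero_ne_one h1

lemma mono_pow (r : ℚ) (n : ℕ) : P.mono r ^ n = P.mono (n * r) := by
  induction n with
  | zero => simp [P.mono_zero]
  | succ n ih => rw [pow_succ, ih, P.mono_mul, Nat.cast_succ, add_one_mul]

/-- Evaluation `E[X] → K` at `X = t^{1/M}`. -/
noncomputable def evalMono (M : ℕ+) : E[X] →+* P.K :=
  eval₂RingHom P.emb (P.mono (1 / (M : ℚ)))

lemma evalMono_C (M : ℕ+) (e : E) : P.evalMono M (C e) = P.emb e := eval₂_C _ _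

lemma evalMono_X_pow (M : ℕ+) (n : ℕ) : P.evalMono M (X ^ n) = P.mono (n / M) := by
  rw [map_pow, evalMono, coe_eval₂RingHom, eval₂_X, mono_pow, mul_one_div]

lemma evalMono_C_mul_X_pow (M : ℕ+) (e : E) (n : ℕ) :
    P.evalMono M (C e * X ^ n) = P.emb e * P.mono (n / M) := by
  rw [map_mul, evalMono_C, evalMono_X_pow]

lemma evalMono_mem_Abar (M : ℕ+) (p : E[X]) : P.evalMono M p ∈ P.Abar := by
  induction p using Polynomial.induction_on' with
  | add p q hp hq => rw [map_add]; exact add_mem hp hq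
  | monomial n e =>
    rw [← C_mul_X_pow_eq_monomial, evalMono_C_mul_X_pow]
    exact mul_mem (Subring.subset_closure (Or.inl ⟨e, rfl⟩))
      (Subring.subset_closure (Or.inr ⟨_, (by positivity : (0 : ℚ) ≤ n / M), rfl⟩))

lemma evalMono_ne_zero_and_ν_eq (M : ℕ+) {p : E[X]} (hp : p ≠ 0) :
    P.evalMono M p ≠ 0 ∧ P.ν (P.evalMono M p) = -(p.natDegree / M) := by
  refine induction_with_natDegree_le
    (fun p => p ≠ 0 → P.evalMono M p ≠ 0 ∧ P.ν (P.evalMono M p) = -(p.natDegree / M))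
    p.natDegree (absurd rfl) ?_ ?_ p le_rfl hp
  · intro n e he _ _
    rw [evalMono_C_mul_X_pow, natDegree_C_mul_X_pow n e he]
    have hemb : P.emb e ≠ 0 := (map_ne_zero P.emb).2 he
    refine ⟨mul_ne_zero hemb (P.mono_ne_zero _), ?_⟩
    rw [P.ν_mul _ _ hemb (P.mono_ne_zero _), P.ν_emb e he, P.ν_mono, zero_add]
  · intro f g hfg _ ihf ihg _
    have hg : g ≠ 0 := by rintro rfl; simp at hfg
    obtain ⟨hg', hνg⟩ := ihg hg
    rw [natDegree_add_eq_right_of_natDegree_lt hfg]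
    rcases eq_or_ne f 0 with rfl | hf
    · simpa using ihg hg
    obtain ⟨hf', hνf⟩ := ihf hf
    have hlt : P.ν (P.evalMono M g) < P.ν (P.evalMono M f) := by
      rw [hνf, hνg, neg_lt_neg_iff]
      gcongr
    rw [map_add, add_comm]
    exact ⟨P.add_ne_zero_of_ν_lt hg' hlt, hνg ▸ P.ν_add_eq_of_lt hg' hf' hlt⟩

lemma range_evalMono_le_mul (M k : ℕ+) :
    (P.evalMono M).range ≤ (P.evalMono (M * k)).range := by
  rintro _ ⟨p, rfl⟩
  refine ⟨p.comp (X ^ (k : ℕ)), ?_⟩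
  simp only [evalMono, coe_eval₂RingHom, eval₂_comp, eval₂_X_pow, mono_pow]
  congr 2
  push_cast
  field_simp

lemma directed_range_evalMono : Directed (· ≤ ·) fun M : ℕ+ => (P.evalMono M).range :=
  fun M N => ⟨M * N, P.range_evalMono_le_mul M N, mul_comm M N ▸ P.range_evalMono_le_mul N M⟩

lemma exists_mem_range_evalMono {x : P.K} (hx : x ∈ P.Abar) :
    ∃ M : ℕ+, x ∈ (P.evalMono M).range := by
  have hAbar : P.Abar ≤ ⨆ M : ℕ+, (P.evalMono M).range := by
    refine Subring.closure_le.2 ?_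
    rintro _ (⟨e, rfl⟩ | ⟨r, hr, rfl⟩)
    · exact (Subring.mem_iSup_of_directed P.directed_range_evalMono).2 ⟨1, C e, P.evalMono_C 1 e⟩
    · obtain ⟨n, hn⟩ := Int.eq_ofNat_of_zero_le (Rat.num_nonneg.2 hr)
      refine (Subring.mem_iSup_of_directed P.directed_range_evalMono).2
        ⟨⟨r.den, r.pos⟩, X ^ n, ?_⟩
      refine (P.evalMono_X_pow _ n).trans (congrArg P.mono ?_)
      conv_rhs => rw [← Rat.num_div_den r, hn]
      rfl
  exact (Subring.mem_iSup_of_directed P.directed_range_evalMono).1 (hAbar hx)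

lemma exists_eq_evalMono_div {z : P.K} (hz : z ∈ P.ktilde) :
    ∃ (M : ℕ+) (a b : E[X]), z = P.evalMono M a / P.evalMono M b := by
  obtain ⟨x, hx, y, hy, rfl⟩ := Subfield.mem_closure_iff.1 hz
  rw [Subring.closure_eq] at hx hy
  obtain ⟨M, hxM⟩ := P.exists_mem_range_evalMono hx
  obtain ⟨N, hyN⟩ := P.exists_mem_range_evalMono hy
  obtain ⟨L, hML, hNL⟩ := P.directed_range_evalMono M N
  obtain ⟨a, rfl⟩ := hML hxM
  obtain ⟨b, rfl⟩ := hNL hyN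
  exact ⟨L, a, b, rfl⟩

def HasFiniteCF (z : P.K) : Prop :=
  ∃ (n : ℕ) (f zs : ℕ → P.K), zs 0 = z ∧ (∀ i < n, P.CFStep f zs i) ∧
    f n ∈ P.Abar ∧ zs n = f n

lemma hasFiniteCF_of_mem_Abar {z : P.K} (hz : z ∈ P.Abar) : P.HasFiniteCF z :=
  ⟨0, fun _ => z, fun _ => z, rfl, by simp, hz, rfl⟩

lemma HasFiniteCF.of_inv_sub {z f₀ : P.K} (hf₀ : f₀ ∈ P.Abar) (hν : 0 < P.ν (z - f₀))
    (hne : z ≠ f₀) (h : P.HasFiniteCF (z - f₀)⁻¹) : P.HasFiniteCF z := by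
  obtain ⟨n, f, zs, h0, hsteps, hfn, hlast⟩ := h
  refine ⟨n + 1, fun i => Nat.casesOn i f₀ f, fun i => Nat.casesOn i z zs, rfl, ?_, hfn, hlast⟩
  rintro (_ | i) hi
  · exact ⟨hf₀, hν, hne, h0⟩
  · exact hsteps i (by omega)

lemma hasFiniteCF_evalMono_div (M : ℕ+) (a b : E[X]) :
    P.HasFiniteCF (P.evalMono M a / P.evalMono M b) := by
  induction hd : b.natDegree using Nat.strong_induction_on generalizing a b with
  | _ d ih =>
  rcases eq_or_ne b 0 with rfl | hb
  · simpa using P.hasFiniteCF_of_mem_Abar (zero_mem P.Abar)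
  obtain ⟨hb', hνb⟩ := P.evalMono_ne_zero_and_ν_eq M hb
  have hsplit : P.evalMono M a / P.evalMono M b - P.evalMono M (a / b) =
      P.evalMono M (a % b) / P.evalMono M b := by
    have hdiv : P.evalMono M a = P.evalMono M b * P.evalMono M (a / b) + P.evalMono M (a % b) := by
      rw [← map_mul, ← map_add, EuclideanDomain.div_add_mod]
    rw [hdiv, add_div, mul_div_cancel_left₀ _ hb', add_sub_cancel_left]
  rcases eq_or_ne (a % b) 0 with hr | hr
  · rw [hr, map_zero, zero_div, sub_eq_zero] at hsplit
    exact hsplit ▸ P.hasFiniteCF_of_mem_Abar (P.evalMono_mem_Abar M _)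
  obtain ⟨hr', hνr⟩ := P.evalMono_ne_zero_and_ν_eq M hr
  have hdeg : (a % b).natDegree < b.natDegree := natDegree_lt_natDegree hr (degree_mod_lt a hb)
  refine HasFiniteCF.of_inv_sub P (P.evalMono_mem_Abar M (a / b)) ?_ ?_ ?_
  · rw [hsplit, P.ν_div hr' hb', hνr, hνb]
    have hdegℚ : ((a % b).natDegree : ℚ) < b.natDegree := by exact_mod_cast hdeg
    linarith [div_lt_div_of_pos_right hdegℚ (by positivity : (0 : ℚ) < M)]
  · exact sub_ne_zero.1 (hsplit ▸ div_ne_zero hr' hb')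
  · rw [hsplit, inv_div]
    exact ih _ (hd ▸ hdeg) b (a % b) rfl

end PuiseuxCompletion

open PuiseuxCompletion in
/-- every `z ∈ k̃ = Quot(Ā)` has a terminating continued fraction:
the algorithm reaches a step with `z_n = f_n`. -/
theorem statement11 {E : Type u} [Field E] (P : PuiseuxCompletion E)
    (z : P.K) (hz : z ∈ P.ktilde) :
    ∃ (n : ℕ) (f zs : ℕ → P.K), zs 0 = z ∧ (∀ i < n, P.CFStep f zs i) ∧
      f n ∈ P.Abar ∧ zs n = f n := by
  obtain ⟨M, a, b, rfl⟩ := P.exists_eq_evalMono_div hz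
  exact P.hasFiniteCF_evalMono_div M a b
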